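/- arXiv:2507.04645 — 4 statements merged into one kernel-verified Lean document; each statement's English description precedes it below -/
import Mathlib

section
/- Suppose f, g : ℝ² → ℝ are measurable, g is in the weighted space L²_{θ_{x₀}} (i.e. ∫ |g(x)|²·θ(x−x₀) dx < ∞), and |f(x)| ≤ C·∫_{ℝ²} |g(y)|·θ(x−y) dy for all x, where θ(z) = (1+|z|)^{-3}. Then ∫ |f(x)|²·θ(x−x₀) dx ≤ C₁²·∫ |g(x)|²·θ(x−x₀) dx, where C₁ depends only on C (not on x₀). -/
/-!
Cauchy–Schwarz against the finite-mass weight `θ(x - ·)` gives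
`|f x|² ≤ C² ‖θ‖₁ ∫ |g y|² θ(x - y) dy`. After exchanging the order of integration it remains to
bound `∫ θ(x - y) θ(x - x₀) dx`, and the Peetre-type inequality
`θ(a) θ(b) ≤ 8 θ(a - b) (θ(a) + θ(b))` (one of `‖a‖, ‖b‖` is at least `‖a - b‖ / 2`) bounds it by
`16 ‖θ‖₁ θ(y - x₀)`, uniformly in `x₀`. Integrability of `θ` on `ℝ²` (`3 > 2`) makes `‖θ‖₁` finite.
-/

open MeasureTheory

noncomputable def theta (z : EuclideanSpace ℝ (Fin 2)) : ℝ := ((1 + ‖z‖) ^ 3)⁻¹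

open scoped ENNReal

theorem sq_lintegral_mul_le {α : Type*} [MeasurableSpace α] {μ : Measure α} {u w : α → ℝ≥0∞}
    (hu : AEMeasurable u μ) (hw : AEMeasurable w μ) :
    (∫⁻ a, u a * w a ∂μ) ^ 2 ≤ (∫⁻ a, w a ∂μ) * ∫⁻ a, u a ^ 2 * w a ∂μ := by
  have sqrt_sq (a : ℝ≥0∞) : (a ^ (1 / 2 : ℝ)) ^ 2 = a := by
    rw [← ENNReal.rpow_natCast, ← ENNReal.rpow_mul]; norm_num
  have sq_sqrt (a : ℝ≥0∞) : (a ^ 2) ^ (1 / 2 : ℝ) = a := by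
    rw [← ENNReal.rpow_natCast, ← ENNReal.rpow_mul]; norm_num
  have holder := ENNReal.lintegral_mul_norm_pow_le hw ((hu.pow_const 2).mul hw)
    (g := fun a => u a ^ 2 * w a) (p := 1 / 2) (q := 1 / 2) (by norm_num) (by norm_num)
    (by norm_num)
  have integrand (a : α) : w a ^ (1 / 2 : ℝ) * (u a ^ 2 * w a) ^ (1 / 2 : ℝ) = u a * w a := by
    rw [ENNReal.mul_rpow_of_nonneg _ _ (by norm_num), sq_sqrt]
    nth_rw 3 [← sqrt_sq (w a)]
    ring
  simp only [integrand] at holder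
  calc (∫⁻ a, u a * w a ∂μ) ^ 2
      ≤ ((∫⁻ a, w a ∂μ) ^ (1 / 2 : ℝ) * (∫⁻ a, u a ^ 2 * w a ∂μ) ^ (1 / 2 : ℝ)) ^ 2 :=
        pow_le_pow_left' holder 2
    _ = (∫⁻ a, w a ∂μ) * ∫⁻ a, u a ^ 2 * w a ∂μ := by rw [mul_pow, sqrt_sq, sqrt_sq]

section Convolution

variable {G : Type*} [AddCommGroup G] [MeasurableSpace G] [MeasurableAdd₂ G] [MeasurableNeg G]
  {μ : Measure G} [μ.IsAddLeftInvariant] {k : G → ℝ≥0∞}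

theorem lconvolution_sq_le [μ.IsNegInvariant] (hk : Measurable k) {u : G → ℝ≥0∞}
    (hu : Measurable u) (x : G) :
    (u ⋆ₗ[μ] k) x ^ 2 ≤ (∫⁻ z, k z ∂μ) * ∫⁻ y, u y ^ 2 * k (x - y) ∂μ := by
  simp only [lconvolution, neg_add_eq_sub]
  rw [← lintegral_sub_left_eq_self k x]
  exact sq_lintegral_mul_le hu.aemeasurable (by fun_prop)

theorem lintegral_mul_le_of_peetre {K : ℝ≥0∞}
    (hpeetre : ∀ a b, k a * k b ≤ K * k (a - b) * (k a + k b)) (hk : Measurable k) (y x₀ : G) :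
    ∫⁻ x, k (x - y) * k (x - x₀) ∂μ ≤ 2 * K * (∫⁻ z, k z ∂μ) * k (y - x₀) := by
  calc ∫⁻ x, k (x - y) * k (x - x₀) ∂μ
      ≤ ∫⁻ x, K * k (y - x₀) * (k (x - y) + k (x - x₀)) ∂μ := lintegral_mono fun x => by
        rw [mul_comm, add_comm]; simpa using hpeetre (x - x₀) (x - y)
    _ = 2 * K * (∫⁻ z, k z ∂μ) * k (y - x₀) := by
        rw [lintegral_const_mul _ (by fun_prop), lintegral_add_left (by fun_prop),
          lintegral_sub_right_eq_self k, lintegral_sub_right_eq_self k]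
        ring

theorem lintegral_lconvolution_sq_mul_le [SFinite μ] [μ.IsNegInvariant] {K : ℝ≥0∞}
    (hpeetre : ∀ a b, k a * k b ≤ K * k (a - b) * (k a + k b)) (hk : Measurable k)
    {u : G → ℝ≥0∞} (hu : Measurable u) (x₀ : G) :
    ∫⁻ x, (u ⋆ₗ[μ] k) x ^ 2 * k (x - x₀) ∂μ ≤
      2 * K * (∫⁻ z, k z ∂μ) ^ 2 * ∫⁻ y, u y ^ 2 * k (y - x₀) ∂μ := by
  have tonelli : ∫⁻ x, (∫⁻ y, u y ^ 2 * k (x - y) ∂μ) * k (x - x₀) ∂μ =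
      ∫⁻ y, u y ^ 2 * ∫⁻ x, k (x - y) * k (x - x₀) ∂μ ∂μ :=
    calc _ = ∫⁻ x, ∫⁻ y, u y ^ 2 * (k (x - y) * k (x - x₀)) ∂μ ∂μ :=
          lintegral_congr fun x => by
            rw [← lintegral_mul_const _ (by fun_prop)]
            simp only [mul_assoc]
      _ = ∫⁻ y, ∫⁻ x, u y ^ 2 * (k (x - y) * k (x - x₀)) ∂μ ∂μ :=
          lintegral_lintegral_swap (by fun_prop)
      _ = _ := lintegral_congr fun y => lintegral_const_mul _ (by fun_prop)
  calc ∫⁻ x, (u ⋆ₗ[μ] k) x ^ 2 * k (x - x₀) ∂μ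
      ≤ ∫⁻ x, (∫⁻ z, k z ∂μ) * (∫⁻ y, u y ^ 2 * k (x - y) ∂μ) * k (x - x₀) ∂μ :=
        lintegral_mono fun x => mul_le_mul_left (lconvolution_sq_le hk hu x) _
    _ = (∫⁻ z, k z ∂μ) * ∫⁻ y, u y ^ 2 * ∫⁻ x, k (x - y) * k (x - x₀) ∂μ ∂μ := by
        simp only [mul_assoc]
        rw [lintegral_const_mul _ (by fun_prop), tonelli]
    _ ≤ (∫⁻ z, k z ∂μ) * ∫⁻ y, u y ^ 2 * (2 * K * (∫⁻ z, k z ∂μ) * k (y - x₀)) ∂μ := by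
        gcongr with y
        exact lintegral_mul_le_of_peetre hpeetre hk y x₀
    _ = 2 * K * (∫⁻ z, k z ∂μ) ^ 2 * ∫⁻ y, u y ^ 2 * k (y - x₀) ∂μ := by
        simp only [mul_left_comm (u _ ^ 2)]
        rw [lintegral_const_mul _ (by fun_prop)]
        ring

end Convolution

theorem inv_one_add_pow_mul_inv_one_add_pow_le {a b c : ℝ} (ha : 0 ≤ a) (hb : 0 ≤ b) (hc : 0 ≤ c)
    (habc : c ≤ a + b) (n : ℕ) :
    ((1 + a) ^ n)⁻¹ * ((1 + b) ^ n)⁻¹ ≤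
      2 ^ n * ((1 + c) ^ n)⁻¹ * (((1 + a) ^ n)⁻¹ + ((1 + b) ^ n)⁻¹) := by
  wlog hba : b ≤ a generalizing a b
  · rw [mul_comm, add_comm ((1 + a) ^ n)⁻¹]
    exact this hb ha (by linarith) (le_of_not_ge hba)
  -- `1 + c ≤ 2 (1 + max a b)`, so the slower-decaying factor is controlled by the weight at `c`
  have hfar : ((1 + a) ^ n)⁻¹ ≤ 2 ^ n * ((1 + c) ^ n)⁻¹ := by
    rw [show 2 ^ n * ((1 + c) ^ n)⁻¹ = (((1 + c) / 2) ^ n)⁻¹ by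
      rw [div_pow, inv_div, div_eq_mul_inv]]
    exact inv_anti₀ (by positivity) (pow_le_pow_left₀ (by positivity) (by linarith) n)
  calc ((1 + a) ^ n)⁻¹ * ((1 + b) ^ n)⁻¹
      ≤ 2 ^ n * ((1 + c) ^ n)⁻¹ * ((1 + b) ^ n)⁻¹ := by gcongr
    _ ≤ 2 ^ n * ((1 + c) ^ n)⁻¹ * (((1 + a) ^ n)⁻¹ + ((1 + b) ^ n)⁻¹) := by
        gcongr
        exact le_add_of_nonneg_left (by positivity)

local notation "E" => EuclideanSpace ℝ (Fin 2)

@[fun_prop]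
theorem measurable_theta : Measurable theta := by
  unfold theta; fun_prop

theorem theta_nonneg (z : E) : 0 ≤ theta z := by
  unfold theta; positivity

theorem ofReal_theta_mul_le (a b : E) :
    ENNReal.ofReal (theta a) * ENNReal.ofReal (theta b) ≤
      8 * ENNReal.ofReal (theta (a - b)) *
        (ENNReal.ofReal (theta a) + ENNReal.ofReal (theta b)) := by
  rw [← ENNReal.ofReal_mul (theta_nonneg a),
    ← ENNReal.ofReal_add (theta_nonneg a) (theta_nonneg b),
    show (8 : ℝ≥0∞) = ENNReal.ofReal 8 by norm_num, ← ENNReal.ofReal_mul (by norm_num),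
    ← ENNReal.ofReal_mul (mul_nonneg (by norm_num) (theta_nonneg _))]
  refine ENNReal.ofReal_le_ofReal ?_
  have h := inv_one_add_pow_mul_inv_one_add_pow_le (norm_nonneg a) (norm_nonneg b)
    (norm_nonneg (a - b)) (norm_sub_le a b) 3
  norm_num at h
  simpa only [theta] using h

theorem lintegral_ofReal_theta_lt_top : ∫⁻ z : E, ENNReal.ofReal (theta z) < ⊤ := by
  have hdim : (Module.finrank ℝ E : ℝ) < 3 := by
    rw [finrank_euclideanSpace_fin]; norm_num
  convert finite_integral_one_add_norm (μ := (volume : Measure E)) hdim using 4 with z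
  rw [theta, Real.rpow_neg (by positivity)]
  norm_cast

theorem ofReal_abs_le_lconvolution {f g : E → ℝ} {C : ℝ} (hC : 0 ≤ C) (hg : Measurable g) {x : E}
    (hfg : |f x| ≤ C * ∫ y, |g y| * theta (x - y)) :
    ENNReal.ofReal |f x| ≤
      ENNReal.ofReal C *
        ((fun y => ENNReal.ofReal |g y|) ⋆ₗ fun z => ENNReal.ofReal (theta z)) x := by
  have hint : ENNReal.ofReal (∫ y, |g y| * theta (x - y)) ≤
      ∫⁻ y, ENNReal.ofReal (|g y| * theta (x - y)) := by
    rw [integral_eq_lintegral_of_nonneg_ae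
      (.of_forall fun y => mul_nonneg (abs_nonneg _) (theta_nonneg _))
      (hg.abs.mul (by fun_prop)).aestronglyMeasurable]
    exact ENNReal.ofReal_toReal_le
  calc ENNReal.ofReal |f x|
      ≤ ENNReal.ofReal C * ENNReal.ofReal (∫ y, |g y| * theta (x - y)) := by
        rw [← ENNReal.ofReal_mul hC]; exact ENNReal.ofReal_le_ofReal hfg
    _ ≤ _ := by
        gcongr
        simpa only [lconvolution, neg_add_eq_sub, ENNReal.ofReal_mul (abs_nonneg _)] using hint

theorem ofReal_sq_mul_sixteen_mul_sq_le {C M : ℝ} (hC : 0 ≤ C) (hM : 0 ≤ M) :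
    ENNReal.ofReal C ^ 2 * (2 * 8 * ENNReal.ofReal M ^ 2) ≤
      ENNReal.ofReal ((4 * C * (M + 1)) ^ 2) := by
  rw [← ENNReal.ofReal_pow hC, ← ENNReal.ofReal_pow hM,
    show (2 * 8 : ℝ≥0∞) = ENNReal.ofReal 16 by norm_num, ← ENNReal.ofReal_mul (by norm_num),
    ← ENNReal.ofReal_mul (by positivity)]
  refine ENNReal.ofReal_le_ofReal ?_
  rw [show (4 * C * (M + 1)) ^ 2 = C ^ 2 * (16 * (M + 1) ^ 2) by ring]
  gcongr
  linarith

theorem convolution_weighted_L2_bound :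
    ∀ C > (0 : ℝ), ∃ C₁ > (0 : ℝ),
      ∀ (x₀ : EuclideanSpace ℝ (Fin 2)) (f g : EuclideanSpace ℝ (Fin 2) → ℝ),
        Measurable f → Measurable g →
        (∫⁻ x, ENNReal.ofReal (|g x| ^ 2 * theta (x - x₀))) < ⊤ →
        (∀ x, |f x| ≤ C * ∫ y, |g y| * theta (x - y)) →
        (∫⁻ x, ENNReal.ofReal (|f x| ^ 2 * theta (x - x₀))) ≤
          ENNReal.ofReal (C₁ ^ 2) * ∫⁻ x, ENNReal.ofReal (|g x| ^ 2 * theta (x - x₀)) := by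
  intro C hC
  set k : E → ℝ≥0∞ := fun z => ENNReal.ofReal (theta z)
  set M := (∫⁻ z, k z).toReal
  have hM : ∫⁻ z, k z = ENNReal.ofReal M :=
    (ENNReal.ofReal_toReal lintegral_ofReal_theta_lt_top.ne).symm
  -- `M + 1` rather than `M` keeps `C₁` positive without showing `∫⁻ θ ≠ 0`
  refine ⟨4 * C * (M + 1), by positivity, fun x₀ f g _ hg _ hfg => ?_⟩
  set u : E → ℝ≥0∞ := fun y => ENNReal.ofReal |g y|
  have pointwise (x : E) : ENNReal.ofReal (|f x| ^ 2 * theta (x - x₀)) ≤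
      ENNReal.ofReal C ^ 2 * ((u ⋆ₗ k) x ^ 2 * k (x - x₀)) := by
    rw [ENNReal.ofReal_mul (sq_nonneg _), ENNReal.ofReal_pow (abs_nonneg _), ← mul_assoc,
      ← mul_pow]
    gcongr
    exact ofReal_abs_le_lconvolution hC.le hg (hfg x)
  calc ∫⁻ x, ENNReal.ofReal (|f x| ^ 2 * theta (x - x₀))
      ≤ ∫⁻ x, ENNReal.ofReal C ^ 2 * ((u ⋆ₗ k) x ^ 2 * k (x - x₀)) := lintegral_mono pointwise
    _ = ENNReal.ofReal C ^ 2 * ∫⁻ x, (u ⋆ₗ k) x ^ 2 * k (x - x₀) :=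
        lintegral_const_mul' _ _ (by finiteness)
    _ ≤ ENNReal.ofReal C ^ 2 * (2 * 8 * ENNReal.ofReal M ^ 2 * ∫⁻ y, u y ^ 2 * k (y - x₀)) := by
        rw [← hM]
        gcongr
        exact lintegral_lconvolution_sq_mul_le ofReal_theta_mul_le (by fun_prop) (by fun_prop) x₀
    _ ≤ ENNReal.ofReal ((4 * C * (M + 1)) ^ 2) *
          ∫⁻ x, ENNReal.ofReal (|g x| ^ 2 * theta (x - x₀)) := by
        rw [← mul_assoc]
        refine mul_le_mul' (ofReal_sq_mul_sixteen_mul_sq_le hC.le ENNReal.toReal_nonneg)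
          (lintegral_mono fun y => le_of_eq ?_)
        rw [ENNReal.ofReal_mul (sq_nonneg _), ENNReal.ofReal_pow (abs_nonneg _)]
end

section
/- Suppose f, g : ℝ² → ℝ satisfy |f(x)| ≤ C·∫_{ℝ²} |g(y)|·θ(x−y) dy for all x, where θ(z) = (1+|z|)^{-3}, and sup_{x} |g(x)|·θ(x−x₀)^{-1} < ∞. Then sup_{x} |f(x)|·θ(x−x₀)^{-1} ≤ C₁·sup_{x} |g(x)|·θ(x−x₀)^{-1}, where C₁ depends only on C and not on x₀. -/
open MeasureTheory

lemma theta_pos (z : EuclideanSpace ℝ (Fin 2)) : 0 < theta z := by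
  have : (0:ℝ) < 1 + ‖z‖ := by positivity
  unfold theta; positivity

lemma theta_le_of_norm_le {u v : EuclideanSpace ℝ (Fin 2)} (h : ‖u‖ ≤ 2 * ‖v‖) :
    theta v ≤ 8 * theta u := by
  have hu : (0:ℝ) < 1 + ‖u‖ := by positivity
  have hv : (0:ℝ) < 1 + ‖v‖ := by positivity
  have hA : (0:ℝ) < (1 + ‖u‖) ^ 3 := by positivity
  have hB : (0:ℝ) < (1 + ‖v‖) ^ 3 := by positivity
  have h2 : 1 + ‖u‖ ≤ 2 * (1 + ‖v‖) := by linarith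
  have h3 := pow_le_pow_left₀ hu.le h2 3
  unfold theta
  rw [inv_eq_one_div, inv_eq_one_div, mul_one_div, div_le_div_iff₀ hB hA]
  nlinarith [h3]

lemma theta_integrable : Integrable theta := by
  have h := integrable_one_add_norm (E := EuclideanSpace ℝ (Fin 2)) (μ := volume) (r := 3)
    (by simp [finrank_euclideanSpace]; norm_num)
  refine h.congr (Filter.Eventually.of_forall fun z => ?_)
  rw [theta, ← Real.rpow_natCast (1 + ‖z‖) 3, ← Real.rpow_neg (by positivity)]
  norm_num

lemma peetre (x x₀ y : EuclideanSpace ℝ (Fin 2)) :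
    theta (y - x₀) * theta (x - y) ≤
      8 * theta (x - x₀) * (theta (y - x₀) + theta (x - y)) := by
  have htri : ‖x - x₀‖ ≤ ‖x - y‖ + ‖y - x₀‖ := by
    calc ‖x - x₀‖ = ‖(x - y) + (y - x₀)‖ := by abel_nf
    _ ≤ ‖x - y‖ + ‖y - x₀‖ := norm_add_le _ _
  have ha := (theta_pos (y - x₀)).le
  have hb := (theta_pos (x - y)).le
  have hc := (theta_pos (x - x₀)).le
  rcases le_total (‖x - x₀‖) (2 * ‖x - y‖) with h | h
  · have h8 : theta (x - y) ≤ 8 * theta (x - x₀) := theta_le_of_norm_le h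
    nlinarith [mul_le_mul_of_nonneg_left h8 ha, mul_nonneg hc hb]
  · have h' : ‖x - x₀‖ ≤ 2 * ‖y - x₀‖ := by linarith
    have h8 : theta (y - x₀) ≤ 8 * theta (x - x₀) := theta_le_of_norm_le h'
    nlinarith [mul_le_mul_of_nonneg_left h8 hb, mul_nonneg hc ha]

theorem convolution_weighted_sup_bound :
    ∀ C > (0 : ℝ), ∃ C₁ > (0 : ℝ),
      ∀ (x₀ : EuclideanSpace ℝ (Fin 2)) (f g : EuclideanSpace ℝ (Fin 2) → ℝ),
        Measurable g →
        BddAbove (Set.range fun x => |g x| * (theta (x - x₀))⁻¹) →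
        (∀ x, |f x| ≤ C * ∫ y, |g y| * theta (x - y)) →
        (⨆ x, |f x| * (theta (x - x₀))⁻¹) ≤
          C₁ * ⨆ x, |g x| * (theta (x - x₀))⁻¹ := by
  intro C hC
  set I : ℝ := ∫ z : EuclideanSpace ℝ (Fin 2), theta z with hIdef
  have hI0 : 0 ≤ I := integral_nonneg fun z => (theta_pos z).le
  refine ⟨16 * C * I + 1, by positivity, ?_⟩
  intro x₀ f g hg hBdd hf
  set M : ℝ := ⨆ x, |g x| * (theta (x - x₀))⁻¹ with hMdef
  have hMval : ∀ x, |g x| * (theta (x - x₀))⁻¹ ≤ M := fun x => le_ciSup hBdd x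
  have hM0 : 0 ≤ M :=
    le_trans (mul_nonneg (abs_nonneg _) (inv_nonneg.2 (theta_pos _).le) : (0:ℝ) ≤ |g x₀| * (theta (x₀ - x₀))⁻¹) (hMval x₀)
  have hgle : ∀ y, |g y| ≤ M * theta (y - x₀) := by
    intro y
    have hp := theta_pos (y - x₀)
    have := mul_le_mul_of_nonneg_right (hMval y) hp.le
    rwa [mul_assoc, inv_mul_cancel₀ hp.ne', mul_one] at this
  -- pointwise integral bound
  have key : ∀ x, (∫ y, |g y| * theta (x - y)) ≤ 16 * I * M * theta (x - x₀) := by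
    intro x
    have hint1 : Integrable (fun y => theta (y - x₀)) :=
      theta_integrable.comp_sub_right x₀
    have hint2 : Integrable (fun y => theta (x - y)) :=
      theta_integrable.comp_sub_left x
    have hintbig : Integrable
        (fun y => 8 * M * theta (x - x₀) * (theta (y - x₀) + theta (x - y))) :=
      (hint1.add hint2).const_mul _
    have hle : ∀ y, |g y| * theta (x - y) ≤
        8 * M * theta (x - x₀) * (theta (y - x₀) + theta (x - y)) := by
      intro y
      have h1 : |g y| * theta (x - y) ≤ M * (theta (y - x₀) * theta (x - y)) := by
        rw [← mul_assoc]
        exact mul_le_mul_of_nonneg_right (hgle y) (theta_pos _).le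
      have h2 := mul_le_mul_of_nonneg_left (peetre x x₀ y) hM0
      calc |g y| * theta (x - y) ≤ M * (theta (y - x₀) * theta (x - y)) := h1
        _ ≤ M * (8 * theta (x - x₀) * (theta (y - x₀) + theta (x - y))) := h2
        _ = 8 * M * theta (x - x₀) * (theta (y - x₀) + theta (x - y)) := by ring
    have hmono : (∫ y, |g y| * theta (x - y)) ≤
        ∫ y, 8 * M * theta (x - x₀) * (theta (y - x₀) + theta (x - y)) := by
      refine integral_mono_of_nonneg (Filter.Eventually.of_forall fun y => ?_)
        hintbig (Filter.Eventually.of_forall hle)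
      exact mul_nonneg (abs_nonneg _) (theta_pos _).le
    refine hmono.trans ?_
    rw [integral_const_mul, integral_add hint1 hint2,
      integral_sub_right_eq_self theta x₀, integral_sub_left_eq_self theta volume x]
    rw [← hIdef]
    ring_nf
    linarith
  refine ciSup_le fun x => ?_
  have hp := theta_pos (x - x₀)
  have hfx : |f x| ≤ C * (16 * I * M * theta (x - x₀)) :=
    (hf x).trans (mul_le_mul_of_nonneg_left (key x) hC.le)
  have := mul_le_mul_of_nonneg_right hfx (inv_nonneg.2 hp.le)
  calc |f x| * (theta (x - x₀))⁻¹
      ≤ C * (16 * I * M * theta (x - x₀)) * (theta (x - x₀))⁻¹ := this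
    _ = 16 * C * I * M := by field_simp
    _ ≤ (16 * C * I + 1) * M := by nlinarith
end

section
/- Let L > 0 be sufficiently large, (g_j)_{j ∈ ℤ²} a bounded family of reals, and suppose f : ℝ² → ℝ satisfies |f(y)| ≤ C·∑_{j ∈ ℤ²} |g_j|·θ(y − Lj) for all y, where θ(z) = (1+|z|)^{-3}. Then for any x₀ ∈ ℝ², sup_{x ∈ ℝ²} |f(x)|·θ(x−x₀)^{-1} ≤ C'·sup_{j ∈ ℤ²} |g_j|·θ(x₀ − Lj)^{-1}, with C' independent of L and x₀. -/
/-! If `|g j| ≤ S θ(x₀ - L j)`, the bound at `x` follows from two facts. First,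
`θ(x - p) θ(x₀ - p) ≤ 8 θ(x - x₀) (θ(x - p) + θ(x₀ - p))`, because the farther of `x`, `x₀`
from `p` lies at distance at least `|x - x₀| / 2` from it. Second, for `L ≥ 1` the lattice sums
`∑ⱼ θ(z - L j)` are bounded uniformly in `z` by `8 ∑ₖ θ(k)`: rescaling by `L` only shrinks
distances, and after rounding `z / L` to a lattice point the sum becomes a shift of `∑ₖ θ(k)`. -/

open MeasureTheory

noncomputable def latt (n : ℤ × ℤ) : EuclideanSpace ℝ (Fin 2) :=
  (WithLp.equiv 2 (Fin 2 → ℝ)).symm ![(n.1 : ℝ), (n.2 : ℝ)]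

lemma theta_le_theta_of_norm_le {u v : EuclideanSpace ℝ (Fin 2)} (h : ‖u‖ ≤ ‖v‖) :
    theta v ≤ theta u := by
  unfold theta; gcongr

lemma theta_le_eight_mul_theta {u v : EuclideanSpace ℝ (Fin 2)} (h : 1 + ‖u‖ ≤ 2 * (1 + ‖v‖)) :
    theta v ≤ 8 * theta u := by
  unfold theta
  rw [← div_eq_mul_inv, le_div_iff₀ (by positivity), ← div_eq_inv_mul,
    div_le_iff₀ (by positivity)]
  calc (1 + ‖u‖) ^ 3 ≤ (2 * (1 + ‖v‖)) ^ 3 := by gcongr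
    _ = 8 * (1 + ‖v‖) ^ 3 := by ring

lemma theta_mul_theta_le (x y p : EuclideanSpace ℝ (Fin 2)) :
    theta (x - p) * theta (y - p) ≤ 8 * theta (x - y) * (theta (x - p) + theta (y - p)) := by
  have htri : ‖x - y‖ ≤ ‖x - p‖ + ‖y - p‖ :=
    (norm_sub_le_norm_sub_add_norm_sub x p y).trans_eq (by rw [norm_sub_rev p y])
  have hmin : min (theta (x - p)) (theta (y - p)) ≤ 8 * theta (x - y) := by
    rcases le_total ‖x - p‖ ‖y - p‖ with h | h
    · exact (min_le_right _ _).trans (theta_le_eight_mul_theta (by linarith))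
    · exact (min_le_left _ _).trans (theta_le_eight_mul_theta (by linarith))
  rw [← min_mul_max]
  exact mul_le_mul hmin (max_le_add_of_nonneg (theta_pos _).le (theta_pos _).le)
    (le_max_of_le_left (theta_pos _).le) (by have := theta_pos (x - y); positivity)

lemma latt_sub (m n : ℤ × ℤ) : latt (m - n) = latt m - latt n := by
  ext i
  fin_cases i <;> simp [latt]

lemma summable_theta_latt : Summable fun k : ℤ × ℤ => theta (latt k) := by
  rw [← (finTwoArrowEquiv ℤ).summable_iff]
  refine .of_norm_bounded_eventually (EisensteinSeries.summable_one_div_norm_rpow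
    (show (2 : ℝ) < 3 by norm_num)) ?_
  filter_upwards [Set.Finite.compl_mem_cofinite (Set.finite_singleton 0)] with x hx
  have hx : 0 < ‖x‖ := norm_pos_iff.mpr hx
  have hle : ‖x‖ ≤ ‖latt (finTwoArrowEquiv ℤ x)‖ := by
    refine pi_norm_le_iff_of_nonneg (norm_nonneg _) |>.mpr fun i => ?_
    fin_cases i
    · exact (Int.norm_eq_abs _).trans_le (PiLp.norm_apply_le (latt (finTwoArrowEquiv ℤ x)) 0)
    · exact (Int.norm_eq_abs _).trans_le (PiLp.norm_apply_le (latt (finTwoArrowEquiv ℤ x)) 1)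
  rw [Function.comp_apply, Real.norm_of_nonneg (theta_pos _).le, Real.rpow_neg hx.le,
    Real.rpow_ofNat]
  unfold theta
  gcongr
  linarith

lemma exists_norm_sub_latt_le_one (w : EuclideanSpace ℝ (Fin 2)) :
    ∃ m : ℤ × ℤ, ‖w - latt m‖ ≤ 1 := by
  set v := w - latt (round (w 0), round (w 1))
  have h0 : ‖v 0‖ ≤ 1 / 2 := abs_sub_round (w 0)
  have h1 : ‖v 1‖ ≤ 1 / 2 := abs_sub_round (w 1)
  have hsq : ‖v‖ ^ 2 = ‖v 0‖ ^ 2 + ‖v 1‖ ^ 2 := by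
    rw [PiLp.norm_sq_eq_of_L2, Fin.sum_univ_two]
  exact ⟨_, by nlinarith [norm_nonneg v, norm_nonneg (v 0), norm_nonneg (v 1)]⟩

lemma exists_theta_sub_smul_latt_le {L : ℝ} (hL : 1 ≤ L) (z : EuclideanSpace ℝ (Fin 2)) :
    ∃ m : ℤ × ℤ, ∀ j, theta (z - L • latt j) ≤ 8 * theta (latt (m - j)) := by
  obtain ⟨m, hm⟩ := exists_norm_sub_latt_le_one (L⁻¹ • z)
  refine ⟨m, fun j => ?_⟩
  have hscale : ‖L⁻¹ • z - latt j‖ ≤ ‖z - L • latt j‖ := by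
    have hL0 : 0 < L := one_pos.trans_le hL
    rw [show z - L • latt j = L • (L⁻¹ • z - latt j) by
      rw [smul_sub, smul_inv_smul₀ hL0.ne'], norm_smul, Real.norm_of_nonneg hL0.le]
    exact le_mul_of_one_le_left (norm_nonneg _) hL
  have hshift : ‖latt (m - j)‖ ≤ 1 + ‖L⁻¹ • z - latt j‖ := by
    rw [norm_sub_rev] at hm
    rw [latt_sub]
    exact (norm_sub_le_norm_sub_add_norm_sub _ (L⁻¹ • z) _).trans (by gcongr)
  exact (theta_le_theta_of_norm_le hscale).trans
    (theta_le_eight_mul_theta (by linarith [norm_nonneg (L⁻¹ • z - latt j)]))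

lemma summable_theta_sub_smul_latt {L : ℝ} (hL : 1 ≤ L) (z : EuclideanSpace ℝ (Fin 2)) :
    Summable fun j => theta (z - L • latt j) := by
  obtain ⟨m, hm⟩ := exists_theta_sub_smul_latt_le hL z
  refine .of_nonneg_of_le (fun j => (theta_pos _).le) hm (.mul_left 8 ?_)
  exact (Equiv.subLeft m).summable_iff.mpr summable_theta_latt

lemma tsum_theta_sub_smul_latt_le {L : ℝ} (hL : 1 ≤ L) (z : EuclideanSpace ℝ (Fin 2)) :
    ∑' j, theta (z - L • latt j) ≤ 8 * ∑' k, theta (latt k) := by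
  obtain ⟨m, hm⟩ := exists_theta_sub_smul_latt_le hL z
  have hshift : Summable fun j => theta (latt (m - j)) :=
    (Equiv.subLeft m).summable_iff.mpr summable_theta_latt
  calc ∑' j, theta (z - L • latt j) ≤ ∑' j, 8 * theta (latt (m - j)) :=
        (summable_theta_sub_smul_latt hL z).tsum_le_tsum hm (hshift.mul_left 8)
    _ = 8 * ∑' k, theta (latt k) := by
        rw [tsum_mul_left]
        exact congrArg (8 * ·) ((Equiv.subLeft m).tsum_eq fun k => theta (latt k))

lemma tsum_abs_mul_theta_le {L S : ℝ} (hL : 1 ≤ L) {g : ℤ × ℤ → ℝ}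
    {x₀ : EuclideanSpace ℝ (Fin 2)} (hg : ∀ j, |g j| ≤ S * theta (x₀ - L • latt j))
    (x : EuclideanSpace ℝ (Fin 2)) :
    ∑' j, |g j| * theta (x - L • latt j) ≤
      128 * (∑' k, theta (latt k)) * S * theta (x - x₀) := by
  have hS : 0 ≤ S := nonneg_of_mul_nonneg_left ((abs_nonneg _).trans (hg 0)) (theta_pos _)
  have hpt : ∀ j, |g j| * theta (x - L • latt j) ≤
      8 * S * theta (x - x₀) * (theta (x - L • latt j) + theta (x₀ - L • latt j)) := fun j =>
    calc |g j| * theta (x - L • latt j)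
        ≤ S * theta (x₀ - L • latt j) * theta (x - L • latt j) :=
          mul_le_mul_of_nonneg_right (hg j) (theta_pos _).le
      _ = S * (theta (x - L • latt j) * theta (x₀ - L • latt j)) := by ring
      _ ≤ S * (8 * theta (x - x₀) * (theta (x - L • latt j) + theta (x₀ - L • latt j))) :=
          mul_le_mul_of_nonneg_left (theta_mul_theta_le x x₀ _) hS
      _ = _ := by ring
  have hsum := (summable_theta_sub_smul_latt hL x).add (summable_theta_sub_smul_latt hL x₀)
  have hθ := theta_pos (x - x₀)
  calc ∑' j, |g j| * theta (x - L • latt j)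
      ≤ ∑' j, 8 * S * theta (x - x₀) * (theta (x - L • latt j) + theta (x₀ - L • latt j)) :=
        (Summable.of_nonneg_of_le (fun j => mul_nonneg (abs_nonneg _) (theta_pos _).le) hpt
          (hsum.mul_left _)).tsum_le_tsum hpt (hsum.mul_left _)
    _ = 8 * S * theta (x - x₀) *
          (∑' j, theta (x - L • latt j) + ∑' j, theta (x₀ - L • latt j)) := by
        rw [tsum_mul_left, (summable_theta_sub_smul_latt hL x).tsum_add
          (summable_theta_sub_smul_latt hL x₀)]
    _ ≤ 8 * S * theta (x - x₀) * (8 * ∑' k, theta (latt k) + 8 * ∑' k, theta (latt k)) := by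
        gcongr
        exacts [tsum_theta_sub_smul_latt_le hL x, tsum_theta_sub_smul_latt_le hL x₀]
    _ = _ := by ring

theorem discrete_convolution_sup_bound :
    ∀ C > (0 : ℝ), ∃ C' > (0 : ℝ), ∃ L₀ > (0 : ℝ), ∀ L ≥ L₀,
      ∀ (x₀ : EuclideanSpace ℝ (Fin 2)) (g : ℤ × ℤ → ℝ)
        (f : EuclideanSpace ℝ (Fin 2) → ℝ) (M : ℝ),
        (∀ j, |g j| ≤ M) →
        (∀ y, |f y| ≤ C * ∑' j : ℤ × ℤ, |g j| * theta (y - L • latt j)) →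
        BddAbove (Set.range fun x => |f x| * (theta (x - x₀))⁻¹) →
        BddAbove (Set.range fun j : ℤ × ℤ => |g j| * (theta (x₀ - L • latt j))⁻¹) →
        (⨆ x, |f x| * (theta (x - x₀))⁻¹) ≤
          C' * ⨆ j : ℤ × ℤ, |g j| * (theta (x₀ - L • latt j))⁻¹ := by
  intro C hC
  have hK : 0 < ∑' k, theta (latt k) :=
    summable_theta_latt.tsum_pos (fun k => (theta_pos _).le) 0 (theta_pos _)
  refine ⟨128 * C * ∑' k, theta (latt k), by positivity, 1, one_pos, ?_⟩
  intro L hL x₀ g f _ _ hf _ hbg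
  set S := ⨆ j : ℤ × ℤ, |g j| * (theta (x₀ - L • latt j))⁻¹
  have hg : ∀ j, |g j| ≤ S * theta (x₀ - L • latt j) := fun j =>
    (div_le_iff₀ (theta_pos _)).mp (le_ciSup hbg j)
  refine ciSup_le fun x => ?_
  have hθ := theta_pos (x - x₀)
  calc |f x| * (theta (x - x₀))⁻¹
      ≤ C * (128 * (∑' k, theta (latt k)) * S * theta (x - x₀)) * (theta (x - x₀))⁻¹ := by
        gcongr
        exact (hf x).trans (by gcongr; exact tsum_abs_mul_theta_le hL hg x)
    _ = 128 * C * (∑' k, theta (latt k)) * S := by field_simp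
end

section
/- Let H be a Hilbert space decomposed as H = H₁ ⊕ H₂ via a bounded projection Π, and let a closed operator 𝓛 on H have block form 𝓛 = [[𝓛₁₁, 𝓛₁₂],[𝓛₂₁, 𝓛₂₂]] with 𝓛₁₁ boundedly invertible with ‖𝓛₁₁^{-1}‖ ≤ C₀ and ‖𝓛₁₂‖, ‖𝓛₂₁‖, ‖𝓛₂₂‖ ≤ ε with ε sufficiently small relative to C₀. Then the Riccati equation K = 𝓛₁₁^{-1}·K·𝓛₂₁·K + 𝓛₁₁^{-1}·K·𝓛₂₂ − 𝓛₁₁^{-1}·𝓛₁₂ has a solution K : H₂ → H₁ with ‖K‖ ≤ 2C₀ε, obtained by the Banach contraction principle. -/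
open ContinuousLinearMap

set_option maxHeartbeats 1000000 in
theorem riccati_equation_solvable
    {H₁ H₂ : Type*}
    [NormedAddCommGroup H₁] [InnerProductSpace ℝ H₁] [CompleteSpace H₁]
    [NormedAddCommGroup H₂] [InnerProductSpace ℝ H₂] [CompleteSpace H₂]
    (C₀ ε : ℝ) (hC₀ : 0 < C₀) (hε : 0 ≤ ε) (hsmall : ε ≤ 1 / (4 * C₀))
    (L11 : H₁ →L[ℝ] H₁) (L12 : H₂ →L[ℝ] H₁) (L21 : H₁ →L[ℝ] H₂) (L22 : H₂ →L[ℝ] H₂)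
    (L11inv : H₁ →L[ℝ] H₁)
    (hleft : L11inv.comp L11 = ContinuousLinearMap.id ℝ H₁)
    (hright : L11.comp L11inv = ContinuousLinearMap.id ℝ H₁)
    (hinv : ‖L11inv‖ ≤ C₀)
    (h12 : ‖L12‖ ≤ ε) (h21 : ‖L21‖ ≤ ε) (h22 : ‖L22‖ ≤ ε) :
    ∃ K : H₂ →L[ℝ] H₁,
      K = L11inv.comp (K.comp (L21.comp K)) + L11inv.comp (K.comp L22)
            - L11inv.comp L12 ∧
        ‖K‖ ≤ 2 * C₀ * ε := by
  have hq : C₀ * ε ≤ 1 / 4 := by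
    have h4 : (0:ℝ) < 4 * C₀ := by positivity
    have h := (le_div_iff₀ h4).mp hsmall
    nlinarith
  set r : ℝ := 2 * C₀ * ε with hr
  have hr0 : 0 ≤ r := by positivity
  -- the fixed point map
  set T : (H₂ →L[ℝ] H₁) → (H₂ →L[ℝ] H₁) := fun K =>
    L11inv.comp (K.comp (L21.comp K)) + L11inv.comp (K.comp L22) - L11inv.comp L12 with hT
  -- cubic term bound
  have htriple : ∀ (X : H₂ →L[ℝ] H₁) (Y : H₂ →L[ℝ] H₁),
      ‖L11inv.comp (X.comp (L21.comp Y))‖ ≤ C₀ * (‖X‖ * (ε * ‖Y‖)) := by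
    intro X Y
    calc ‖L11inv.comp (X.comp (L21.comp Y))‖
        ≤ ‖L11inv‖ * ‖X.comp (L21.comp Y)‖ := opNorm_comp_le _ _
      _ ≤ ‖L11inv‖ * (‖X‖ * ‖L21.comp Y‖) := by
          gcongr; exact opNorm_comp_le _ _
      _ ≤ ‖L11inv‖ * (‖X‖ * (‖L21‖ * ‖Y‖)) := by
          gcongr; exact opNorm_comp_le _ _
      _ ≤ C₀ * (‖X‖ * (ε * ‖Y‖)) := by gcongr
  have hlin : ∀ (X : H₂ →L[ℝ] H₁), ‖L11inv.comp (X.comp L22)‖ ≤ C₀ * (‖X‖ * ε) := by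
    intro X
    calc ‖L11inv.comp (X.comp L22)‖
        ≤ ‖L11inv‖ * ‖X.comp L22‖ := opNorm_comp_le _ _
      _ ≤ ‖L11inv‖ * (‖X‖ * ‖L22‖) := by gcongr; exact opNorm_comp_le _ _
      _ ≤ C₀ * (‖X‖ * ε) := by gcongr
  have hconst : ‖L11inv.comp L12‖ ≤ C₀ * ε := by
    calc ‖L11inv.comp L12‖ ≤ ‖L11inv‖ * ‖L12‖ := opNorm_comp_le _ _
      _ ≤ C₀ * ε := by gcongr
  -- T maps the ball into itself
  have hmaps : ∀ K : H₂ →L[ℝ] H₁, ‖K‖ ≤ r → ‖T K‖ ≤ r := by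
    intro K hK
    have hK0 : 0 ≤ ‖K‖ := norm_nonneg _
    have h1 := htriple K K
    have h2 := hlin K
    calc ‖T K‖ ≤ ‖L11inv.comp (K.comp (L21.comp K))‖ + ‖L11inv.comp (K.comp L22)‖
          + ‖L11inv.comp L12‖ := norm_sub_le _ _ |>.trans (by gcongr; exact norm_add_le _ _)
      _ ≤ C₀ * (‖K‖ * (ε * ‖K‖)) + C₀ * (‖K‖ * ε) + C₀ * ε := by gcongr
      _ ≤ C₀ * (r * (ε * r)) + C₀ * (r * ε) + C₀ * ε := by gcongr
      _ ≤ r := by rw [hr]; nlinarith [mul_nonneg hC₀.le hε, sq_nonneg (C₀ * ε)]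
  -- T is Lipschitz with constant 1/2 on the ball
  have hlip : ∀ K K' : H₂ →L[ℝ] H₁, ‖K‖ ≤ r → ‖K'‖ ≤ r →
      ‖T K - T K'‖ ≤ (1/2) * ‖K - K'‖ := by
    intro K K' hK hK'
    have hdecomp : T K - T K' =
        L11inv.comp ((K - K').comp (L21.comp K))
          + L11inv.comp (K'.comp (L21.comp (K - K')))
          + L11inv.comp ((K - K').comp L22) := by
      ext x
      simp only [hT, ContinuousLinearMap.add_apply, ContinuousLinearMap.sub_apply,
        ContinuousLinearMap.comp_apply, map_sub]
      abel
    have h1 := htriple (K - K') K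
    have h2 := htriple K' (K - K')
    have h3 := hlin (K - K')
    have hd0 : 0 ≤ ‖K - K'‖ := norm_nonneg _
    calc ‖T K - T K'‖
        ≤ ‖L11inv.comp ((K - K').comp (L21.comp K))‖
          + ‖L11inv.comp (K'.comp (L21.comp (K - K')))‖
          + ‖L11inv.comp ((K - K').comp L22)‖ := by
            rw [hdecomp]; exact (norm_add_le _ _).trans (by gcongr; exact norm_add_le _ _)
      _ ≤ C₀ * (‖K - K'‖ * (ε * ‖K‖)) + C₀ * (‖K'‖ * (ε * ‖K - K'‖))
          + C₀ * (‖K - K'‖ * ε) := by gcongr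
      _ ≤ C₀ * (‖K - K'‖ * (ε * r)) + C₀ * (r * (ε * ‖K - K'‖))
          + C₀ * (‖K - K'‖ * ε) := by gcongr
      _ ≤ (1/2) * ‖K - K'‖ := by
            rw [hr]
            nlinarith [hq, hd0, mul_nonneg hC₀.le hε,
              mul_le_mul_of_nonneg_right hq hd0,
              mul_le_mul_of_nonneg_right (mul_le_mul_of_nonneg_right hq (mul_nonneg hC₀.le hε)) hd0]
  -- set up the complete metric space
  set s : Set (H₂ →L[ℝ] H₁) := {K | ‖K‖ ≤ r} with hs
  have hclosed : IsClosed s := isClosed_le continuous_norm continuous_const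
  haveI : CompleteSpace s := hclosed.completeSpace_coe
  haveI : Nonempty s := ⟨⟨0, by simp [hs, hr0]⟩⟩
  set f : s → s := fun K => ⟨T K.1, hmaps K.1 K.2⟩ with hf
  have hcontr : ContractingWith (1/2 : NNReal) f := by
    constructor
    · exact_mod_cast (by norm_num : ((1:ℝ)/2) < 1)
    · refine LipschitzWith.of_dist_le_mul fun x y => ?_
      have h := hlip x.1 y.1 x.2 y.2
      simp only [Subtype.dist_eq, dist_eq_norm]
      calc ‖(f x).1 - (f y).1‖ = ‖T x.1 - T y.1‖ := rfl
        _ ≤ 1/2 * ‖x.1 - y.1‖ := h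
        _ = ((1/2 : NNReal) : ℝ) * ‖x.1 - y.1‖ := by norm_num
  set x := ContractingWith.fixedPoint f hcontr with hxdef
  have hfix : f x = x := hcontr.fixedPoint_isFixedPt
  refine ⟨x.1, ?_, x.2⟩
  have := congrArg Subtype.val hfix
  exact this.symm
end
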